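/- Let (H1,H2) be a pair of hypergraphs over the same set of nodes. Then the number of configurations in the domain of any greedy strategy in the Robber and Captain game on (H1,H2) is at most |edges(H2)| · |nodes(H1)| · (|edges(H2)| · |nodes(H1)| + 1) + 1. -/

import Mathlib

/-! Common definitions: hypergraphs, components, the Robber and Captain game,
the Robber and Marshal game, tree projections, (generalized) hypertree decompositions. -/

variable {α : Type} [DecidableEq α]

/-- A hypergraph: a finite set of nodes and a finite set of hyperedges, each a subset of the
nodes, such that every node occurs in some hyperedge. -/
structure HGraph (α : Type) [DecidableEq α] where
  nodes : Finset α
  edges : Finset (Finset α)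
  edge_sub : ∀ h ∈ edges, h ⊆ nodes
  cover : ∀ x ∈ nodes, ∃ h ∈ edges, x ∈ h

namespace HGraph

/-- `X` and `Y` are `[M]`-adjacent: some hyperedge `h` satisfies `{X,Y} ⊆ h \ M`. -/
def MAdj (H : HGraph α) (M : Finset α) (X Y : α) : Prop :=
  ∃ h ∈ H.edges, X ∈ h ∧ Y ∈ h ∧ X ∉ M ∧ Y ∉ M

/-- An `[M]`-path: a sequence of consecutively `[M]`-adjacent nodes. -/
def MPath (H : HGraph α) (M : Finset α) : α → α → Prop :=
  Relation.ReflTransGen (H.MAdj M)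

/-- `W` is `[M]`-connected: every two nodes of `W` are joined by an `[M]`-path. -/
def MConn (H : HGraph α) (M W : Finset α) : Prop :=
  ∀ X ∈ W, ∀ Y ∈ W, H.MPath M X Y

/-- `C` is an `[M]`-component: a maximal `[M]`-connected nonempty subset of `nodes(H) \ M`. -/
def MComp (H : HGraph α) (M C : Finset α) : Prop :=
  C.Nonempty ∧ C ⊆ H.nodes \ M ∧ H.MConn M C ∧
    ∀ C' : Finset α, C ⊆ C' → C' ⊆ H.nodes \ M → H.MConn M C' → C' = C

/-- The frontier `Fr(C)`: the union of all hyperedges of `H` meeting `C`. -/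
def Fr (H : HGraph α) (C : Finset α) : Finset α :=
  (H.edges.filter fun h => (h ∩ C).Nonempty).sup id

/-- The border `∂C = Fr(C) \ C`. -/
def border (H : HGraph α) (C : Finset α) : Finset α := H.Fr C \ C

/-- `H1 ≤ H2`: every hyperedge of `H1` is contained in some hyperedge of `H2`. -/
def HLE (H1 H2 : HGraph α) : Prop := ∀ h ∈ H1.edges, ∃ h' ∈ H2.edges, h ⊆ h'

/-- `H` is acyclic iff it has a join tree: a tree on the hyperedges of `H` such that, for every
node `X`, the set of hyperedges containing `X` induces a connected subtree. -/
def IsAcyclicHG (H : HGraph α) : Prop :=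
  ∃ T : SimpleGraph {h : Finset α // h ∈ H.edges},
    T.IsTree ∧ ∀ X ∈ H.nodes,
      (T.induce {e : {h : Finset α // h ∈ H.edges} | X ∈ e.1}).Connected

/-- `H^k`: the hypergraph over the same nodes whose hyperedges are all unions of at most `k`
(and at least one) hyperedges of `H`. -/
def pow (H : HGraph α) (k : ℕ) (hk : 1 ≤ k) : HGraph α where
  nodes := H.nodes
  edges := (H.edges.powerset.filter fun S => S.Nonempty ∧ S.card ≤ k).image fun S => S.sup id
  edge_sub := by
    intro h hh
    simp only [Finset.mem_image, Finset.mem_filter, Finset.mem_powerset] at hh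
    obtain ⟨S, ⟨hS, _, _⟩, rfl⟩ := hh
    exact Finset.sup_le fun i hi => H.edge_sub i (hS hi)
  cover := by
    intro x hx
    obtain ⟨h, hh, hxh⟩ := H.cover x hx
    refine ⟨h, ?_, hxh⟩
    simp only [Finset.mem_image, Finset.mem_filter, Finset.mem_powerset]
    exact ⟨{h}, ⟨Finset.singleton_subset_iff.mpr hh, Finset.singleton_nonempty h,
      by simpa using hk⟩, by simp⟩

/-- The simplicial version of `H`: same nodes, and hyperedges all nonempty subsets of
hyperedges of `H`. -/
def simplicial (H : HGraph α) : HGraph α where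
  nodes := H.nodes
  edges := (H.edges.biUnion Finset.powerset).filter fun s => s.Nonempty
  edge_sub := by
    intro h hh
    simp only [Finset.mem_filter, Finset.mem_biUnion, Finset.mem_powerset] at hh
    obtain ⟨⟨e, he, hsub⟩, -⟩ := hh
    exact hsub.trans (H.edge_sub e he)
  cover := by
    intro x hx
    obtain ⟨h, hh, hxh⟩ := H.cover x hx
    refine ⟨h, ?_, hxh⟩
    simp only [Finset.mem_filter, Finset.mem_biUnion, Finset.mem_powerset]
    exact ⟨⟨h, hh, le_refl _⟩, ⟨x, hxh⟩⟩

end HGraph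

/-- A tree projection of `H1` with respect to `H2`: an acyclic hypergraph `Ha` over the nodes
of `H1` with `H1 ≤ Ha ≤ H2`. -/
def IsTreeProjection (Ha H1 H2 : HGraph α) : Prop :=
  Ha.nodes = H1.nodes ∧ Ha.IsAcyclicHG ∧ HGraph.HLE H1 Ha ∧ HGraph.HLE Ha H2

def HasTreeProjection (H1 H2 : HGraph α) : Prop := ∃ Ha, IsTreeProjection Ha H1 H2

/-! ### The Robber and Captain game -/

/-- A configuration `(h, M, C)`. -/
abbrev Config (α : Type) := Finset α × Finset α × Finset α

/-- The initial configuration `(∅, ∅, nodes(H1))`. -/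
def initConfig (H1 : HGraph α) : Config α := (∅, ∅, H1.nodes)

/-- `Cr` is a `[v, Mr]`-option: an `[Mr]`-component `Cr` of `H1` such that `C ∪ Cr` is
`[M ∩ Mr]`-connected, where `v = (h, M, C)`. -/
def IsOption (H1 : HGraph α) (v : Config α) (Mr Cr : Finset α) : Prop :=
  H1.MComp Mr Cr ∧ H1.MConn (v.2.1 ∩ Mr) (v.2.2 ∪ Cr)

/-- The successor relation of the strategy graph (arcs from a configuration in the domain to the
configurations resulting from the Captain's move and the Robber's choice of an option). -/
def StratSucc (H1 : HGraph α) (dom : Set (Config α))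
    (mv : Config α → Finset α × Finset α) (a b : Config α) : Prop :=
  a ∈ dom ∧ b.1 = (mv a).1 ∧ b.2.1 = (mv a).2 ∧ IsOption H1 a (mv a).2 b.2.2

/-- A strategy for the Captain in the Robber and Captain game on `(H1, H2)`. -/
structure Strategy (H1 H2 : HGraph α) where
  dom : Set (Config α)
  move : Config α → Finset α × Finset α
  init_mem : initConfig H1 ∈ dom
  valid : ∀ v ∈ dom, v = initConfig H1 ∨
    (v.1 ∈ H2.edges ∧ v.2.1 ⊆ v.1 ∧ H1.MComp v.2.1 v.2.2)
  move_edge : ∀ v ∈ dom, (move v).1 ∈ H2.edges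
  move_sub : ∀ v ∈ dom, (move v).2 ⊆ (move v).1 ∩ H1.Fr v.2.2
  closed : ∀ v ∈ dom, ∀ Cr : Finset α,
    IsOption H1 v (move v).2 Cr → ((move v).1, (move v).2, Cr) ∈ dom
  reach : ∀ v ∈ dom, Relation.ReflTransGen (StratSucc H1 dom move) (initConfig H1) v

namespace Strategy

variable {H1 H2 : HGraph α}

/-- The arc relation of the strategy graph `G(σ)`. -/
def Succ (σ : Strategy H1 H2) : Config α → Config α → Prop :=
  StratSucc H1 σ.dom σ.move

/-- `σ` is winning iff its strategy graph is acyclic. -/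
def Winning (σ : Strategy H1 H2) : Prop :=
  ∀ v : Config α, ¬ Relation.TransGen σ.Succ v v

/-- `σ` is monotone: every move is monotone, i.e. every option shrinks the component. -/
def IsMonotone (σ : Strategy H1 H2) : Prop :=
  ∀ v ∈ σ.dom, ∀ Cr : Finset α, IsOption H1 v (σ.move v).2 Cr → Cr ⊆ v.2.2

/-- `σ` is greedy: at `v = (h_p, M_p, C_p)` the move `(h_r, M_r)` satisfies
`M_r = h_r ∩ Fr(C_p)`, with `h_r = h_p` whenever `h_p ∩ C_p ≠ ∅` (otherwise `h_r` is an
arbitrary hyperedge of `H2`, which is guaranteed by `move_edge`). -/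
def Greedy (σ : Strategy H1 H2) : Prop :=
  ∀ v ∈ σ.dom, (σ.move v).2 = (σ.move v).1 ∩ H1.Fr v.2.2 ∧
    ((v.1 ∩ v.2.2).Nonempty → (σ.move v).1 = v.1)

/-- `σ` is nice: `σ(h_p, M_p, C_p) = (h_p, ∂C_p)` whenever `∂C_p ⊂ M_p`. -/
def Nice (σ : Strategy H1 H2) : Prop :=
  ∀ v ∈ σ.dom, H1.border v.2.2 ⊂ v.2.1 → σ.move v = (v.1, H1.border v.2.2)

end Strategy

/-! ### The Robber and Marshal game -/

/-- A configuration `(h, C)` of the Robber and Marshal game. -/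
abbrev MConfig (α : Type) := Finset α × Finset α

/-- The Robber's options in the Robber and Marshal game: `Cr` is an `[hr]`-component such that
`C ∪ Cr` is `[h ∩ hr]`-connected, where `v = (h, C)`. -/
def MarshalOption (H1 : HGraph α) (v : MConfig α) (hr Cr : Finset α) : Prop :=
  H1.MComp hr Cr ∧ H1.MConn (v.1 ∩ hr) (v.2 ∪ Cr)

/-- The successor relation of the Robber and Marshal game under a given Marshal strategy. -/
def MarSucc (H1 : HGraph α) (dom : Set (MConfig α)) (mv : MConfig α → Finset α)
    (a b : MConfig α) : Prop :=
  a ∈ dom ∧ ¬ a.2 ⊆ a.1 ∧ b.1 = mv a ∧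
    (MarshalOption H1 a (mv a) b.2 ∨
      ((¬ ∃ Cr : Finset α, MarshalOption H1 a (mv a) Cr) ∧ b.2 = ∅))

/-- A strategy for the Marshal in the Robber and Marshal game on `(H1, H2)`.
A configuration `(h, C)` with `C ⊆ h` is a capture configuration; at any other configuration of
the domain the Marshal moves to a hyperedge of `H2`. -/
structure MarshalStrategy (H1 H2 : HGraph α) where
  dom : Set (MConfig α)
  move : MConfig α → Finset α
  init_mem : (∅, H1.nodes) ∈ dom
  valid : ∀ v ∈ dom, v = ((∅ : Finset α), H1.nodes) ∨
    (v.1 ∈ H2.edges ∧ (H1.MComp v.1 v.2 ∨ v.2 = ∅))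
  move_edge : ∀ v ∈ dom, ¬ v.2 ⊆ v.1 → move v ∈ H2.edges
  closed : ∀ v ∈ dom, ¬ v.2 ⊆ v.1 → ∀ Cr : Finset α,
    MarshalOption H1 v (move v) Cr → (move v, Cr) ∈ dom
  closed_cap : ∀ v ∈ dom, ¬ v.2 ⊆ v.1 →
    (¬ ∃ Cr : Finset α, MarshalOption H1 v (move v) Cr) → ((move v, ∅) : MConfig α) ∈ dom
  reach : ∀ v ∈ dom,
    Relation.ReflTransGen (MarSucc H1 dom move) ((∅ : Finset α), H1.nodes) v

namespace MarshalStrategy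

variable {H1 H2 : HGraph α}

/-- The Marshal wins: starting from the initial configuration the game always ends in a capture
configuration; equivalently, the game graph of the strategy is acyclic. -/
def Winning (μ : MarshalStrategy H1 H2) : Prop :=
  ∀ v : MConfig α, ¬ Relation.TransGen (MarSucc H1 μ.dom μ.move) v v

/-- The Marshal strategy is monotone: in every move, every available component shrinks. -/
def IsMonotone (μ : MarshalStrategy H1 H2) : Prop :=
  ∀ v ∈ μ.dom, ¬ v.2 ⊆ v.1 → ∀ Cr : Finset α, MarshalOption H1 v (μ.move v) Cr → Cr ⊆ v.2

end MarshalStrategy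

/-! ### Rooted trees and (generalized) hypertree decompositions -/

/-- A finite rooted tree, encoded by a parent function on `Fin (size+1)`. -/
structure RTree where
  size : ℕ
  parent : Fin (size + 1) → Fin (size + 1)
  root : Fin (size + 1)
  parent_root : parent root = root
  reach_root : ∀ v, ∃ m : ℕ, parent^[m] v = root

namespace RTree

/-- Adjacency in the rooted tree. -/
def Adj (T : RTree) (a b : Fin (T.size + 1)) : Prop :=
  a ≠ b ∧ (T.parent a = b ∨ T.parent b = a)

/-- A set of vertices induces a connected subtree. -/
def ConnIn (T : RTree) (S : Set (Fin (T.size + 1))) : Prop :=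
  ∀ a ∈ S, ∀ b ∈ S,
    Relation.ReflTransGen (fun x y => T.Adj x y ∧ x ∈ S ∧ y ∈ S) a b

/-- `q` is a vertex of the subtree rooted at `p` (i.e. a descendant of `p`). -/
def Desc (T : RTree) (p q : Fin (T.size + 1)) : Prop :=
  ∃ m : ℕ, T.parent^[m] q = p

end RTree

/-- A generalized hypertree decomposition of `H`. -/
structure GHDec (H : HGraph α) where
  T : RTree
  chi : Fin (T.size + 1) → Finset α
  lam : Fin (T.size + 1) → Finset (Finset α)
  chi_sub : ∀ p, chi p ⊆ H.nodes
  lam_sub : ∀ p, lam p ⊆ H.edges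
  edge_cover : ∀ h ∈ H.edges, ∃ p, h ⊆ chi p
  conn : ∀ Y ∈ H.nodes, T.ConnIn {p | Y ∈ chi p}
  chi_cov : ∀ p, chi p ⊆ (lam p).sup id

namespace GHDec

variable {H : HGraph α}

/-- The decomposition has width at most `k`. -/
def WidthLE (D : GHDec H) (k : ℕ) : Prop := ∀ p, (D.lam p).card ≤ k

/-- Condition (4) of hypertree decompositions: for every vertex `p`, the intersection of
`⋃ λ(p)` with `⋃_{q in the subtree rooted at p} χ(q)` is contained in `χ(p)`. -/
def IsHD (D : GHDec H) : Prop :=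
  ∀ p, ∀ x ∈ (D.lam p).sup id, (∃ q, D.T.Desc p q ∧ x ∈ D.chi q) → x ∈ D.chi p

end GHDec

/-! At a configuration whose hyperedge meets the Robber's component, a greedy Captain keeps
that hyperedge, and every Robber option is then disjoint from it. Hence a configuration
`(h, M, C)` is determined by `h`, a node `x ∈ C` (chosen in `h` when possible) and the
component `C₀` of its parent, or of its grandparent when the parent's hyperedge meets the
parent's component: either `M = h ∩ Fr(C₀)`, or `x ∉ h` and `M = h ∩ Fr(C')` for the
`[h ∩ Fr(C₀)]`-component `C'` containing `x`. Since `C₀` is `nodes(H1)` or the `[g]`-component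
of a node for some hyperedge `g` of `H2`, this leaves
`|edges(H2)| · |nodes(H1)| · (|edges(H2)| · |nodes(H1)| + 1) + 1` possible codes. -/

theorem Set.finite_and_ncard_le_of_codes {β γ : Type*} [Nonempty β] {s : Set β} {t : Finset γ}
    (R : γ → β → Prop) (hR : ∀ c b b', R c b → R c b' → b = b')
    (hs : ∀ b ∈ s, ∃ c ∈ t, R c b) : s.Finite ∧ s.ncard ≤ t.card := by
  set decode := fun c => Classical.epsilon (R c)
  have hsub : s ⊆ decode '' t := by
    intro b hb
    obtain ⟨c, hc, hcb⟩ := hs b hb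
    exact ⟨c, hc, hR c _ _ (Classical.epsilon_spec ⟨b, hcb⟩) hcb⟩
  have hfin : (decode '' t).Finite := t.finite_toSet.image decode
  refine ⟨hfin.subset hsub, ?_⟩
  calc s.ncard ≤ (decode '' t).ncard := Set.ncard_le_ncard hsub hfin
    _ ≤ (t : Set γ).ncard := Set.ncard_image_le t.finite_toSet
    _ = t.card := Set.ncard_coe_finset t

namespace HGraph

variable {H : HGraph α} {M M' C C' W : Finset α} {x y : α}

theorem mem_Fr : y ∈ H.Fr C ↔ ∃ e ∈ H.edges, (e ∩ C).Nonempty ∧ y ∈ e := by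
  simp [Fr, Finset.mem_sup, and_assoc]

theorem mem_Fr_of_mem (hx : x ∈ H.nodes) (hxC : x ∈ C) : x ∈ H.Fr C := by
  obtain ⟨e, he, hxe⟩ := H.cover x hx
  exact mem_Fr.2 ⟨e, he, ⟨x, Finset.mem_inter.2 ⟨hxe, hxC⟩⟩, hxe⟩

theorem MAdj.symm (h : H.MAdj M x y) : H.MAdj M y x := by
  obtain ⟨e, he, hx, hy, hxM, hyM⟩ := h
  exact ⟨e, he, hy, hx, hyM, hxM⟩

theorem MAdj.mem_of_border_subset (hb : H.border C ⊆ M) (hxy : H.MAdj M x y) (hx : x ∈ C) :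
    y ∈ C := by
  obtain ⟨e, he, hxe, hye, -, hyM⟩ := hxy
  by_contra hy
  exact hyM (hb (Finset.mem_sdiff.2
    ⟨mem_Fr.2 ⟨e, he, ⟨x, Finset.mem_inter.2 ⟨hxe, hx⟩⟩, hye⟩, hy⟩))

theorem MPath.mem_of_border_subset (hb : H.border C ⊆ M) (hxy : H.MPath M x y) (hx : x ∈ C) :
    y ∈ C := by
  induction hxy with
  | refl => exact hx
  | tail _ hstep ih => exact hstep.mem_of_border_subset hb ih

theorem MConn.of_hub (hx : ∀ a ∈ W, H.MPath M a x ∧ H.MPath M x a) : H.MConn M W :=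
  fun a ha b hb => (hx a ha).1.trans (hx b hb).2

theorem MComp.subset_nodes (hC : H.MComp M C) : C ⊆ H.nodes :=
  fun _ hz => (Finset.mem_sdiff.1 (hC.2.1 hz)).1

theorem MComp.notMem (hC : H.MComp M C) (hx : x ∈ C) : x ∉ M :=
  (Finset.mem_sdiff.1 (hC.2.1 hx)).2

theorem MComp.eq_of_mem (hC : H.MComp M C) (hC' : H.MComp M C') (hx : x ∈ C) (hx' : x ∈ C') :
    C = C' := by
  have hconn : H.MConn M (C ∪ C') := MConn.of_hub (x := x) fun a ha => by
    rcases Finset.mem_union.1 ha with ha | ha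
    · exact ⟨hC.2.2.1 a ha x hx, hC.2.2.1 x hx a ha⟩
    · exact ⟨hC'.2.2.1 a ha x hx', hC'.2.2.1 x hx' a ha⟩
  have hsub : C ∪ C' ⊆ H.nodes \ M := Finset.union_subset hC.2.1 hC'.2.1
  exact (hC.2.2.2 _ Finset.subset_union_left hsub hconn).symm.trans
    (hC'.2.2.2 _ Finset.subset_union_right hsub hconn)

theorem MComp.border_subset (hC : H.MComp M C) : H.border C ⊆ M := by
  intro y hy
  obtain ⟨hyFr, hyC⟩ := Finset.mem_sdiff.1 hy
  obtain ⟨e, he, ⟨w, hw⟩, hye⟩ := mem_Fr.1 hyFr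
  obtain ⟨hwe, hwC⟩ := Finset.mem_inter.1 hw
  by_contra hyM
  have hyw : H.MAdj M y w := ⟨e, he, hye, hwe, hyM, hC.notMem hwC⟩
  have hconn : H.MConn M (insert y C) := MConn.of_hub (x := w) fun a ha => by
    rcases Finset.mem_insert.1 ha with rfl | ha
    · exact ⟨.single hyw, .single hyw.symm⟩
    · exact ⟨hC.2.2.1 a ha w hwC, hC.2.2.1 w hwC a ha⟩
  have hsub : insert y C ⊆ H.nodes \ M :=
    Finset.insert_subset (Finset.mem_sdiff.2 ⟨H.edge_sub e he hye, hyM⟩) hC.2.1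
  exact hyC (hC.2.2.2 _ (Finset.subset_insert y C) hsub hconn ▸ Finset.mem_insert_self y C)

theorem MComp.of_border_subset (hC : H.MComp M C) (hb : H.border C ⊆ M') (hd : Disjoint C M') :
    H.MComp M' C := by
  have lift : ∀ {a b}, a ∈ C → H.MPath M a b → H.MPath M' a b := by
    intro a b ha hab
    induction hab with
    | refl => exact .refl
    | tail hab hstep ih =>
      have hu := MPath.mem_of_border_subset hC.border_subset hab ha
      have hv := hstep.mem_of_border_subset hC.border_subset hu
      obtain ⟨e, he, hue, hve, -, -⟩ := hstep
      exact ih.tail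
        ⟨e, he, hue, hve, Finset.disjoint_left.1 hd hu, Finset.disjoint_left.1 hd hv⟩
  refine ⟨hC.1,
    fun z hz => Finset.mem_sdiff.2 ⟨hC.subset_nodes hz, Finset.disjoint_left.1 hd hz⟩,
    fun a ha b hb => lift ha (hC.2.2.1 a ha b hb), fun C' hCC' _ hconn => ?_⟩
  obtain ⟨x, hx⟩ := hC.1
  exact Finset.Subset.antisymm
    (fun y hy => (hconn x (hCC' hx) y hy).mem_of_border_subset hb hx) hCC'

def Denotes (H : HGraph α) : Option (Finset α × α) → Finset α → Prop
  | none, C => C = H.nodes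
  | some (g, y), C => y ∈ C ∧ H.MComp g C

theorem Denotes.unique : ∀ {d}, H.Denotes d C → H.Denotes d C' → C = C'
  | none, hC, hC' => hC.trans hC'.symm
  | some _, hC, hC' => hC.2.eq_of_mem hC'.2 hC.1 hC'.1

end HGraph

def Codes (H1 : HGraph α) :
    Option ((Finset α × α) × Option (Finset α × α)) → Config α → Prop
  | none, v => v = initConfig H1
  | some ((h, x), d), v =>
      v.1 = h ∧ x ∈ v.2.2 ∧ ((h ∩ v.2.2).Nonempty → x ∈ h) ∧ H1.MComp v.2.1 v.2.2 ∧
        ∃ C₀, H1.Denotes d C₀ ∧ (v.2.1 = h ∩ H1.Fr C₀ ∨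
          x ∉ h ∧ ∃ C, H1.MComp (h ∩ H1.Fr C₀) C ∧ x ∈ C ∧ (h ∩ C).Nonempty ∧
            v.2.1 = h ∩ H1.Fr C)

theorem Codes.unique {H1 : HGraph α} :
    ∀ {c : Option ((Finset α × α) × Option (Finset α × α))} {v w : Config α},
      Codes H1 c v → Codes H1 c w → v = w
  | none, _, _, hv, hw => hv.trans hw.symm
  | some ((h, x), d), v, w, ⟨hv1, hxv, hxhv, hCv, C₀, hd, hMv⟩,
      ⟨hw1, hxw, hxhw, hCw, C₀', hd', hMw⟩ => by
    obtain rfl := hd.unique hd'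
    have hM : v.2.1 = w.2.1 := by
      rcases hMv with hMv | ⟨hxh, C, hC, hxC, hhC, hMv⟩ <;>
        rcases hMw with hMw | ⟨hxh', C', hC', hxC', hhC', hMw⟩
      · rw [hMv, hMw]
      · exact absurd (hxhv (hCv.eq_of_mem (hMv ▸ hC') hxv hxC' ▸ hhC')) hxh'
      · exact absurd (hxhw (hCw.eq_of_mem (hMw ▸ hC) hxw hxC ▸ hhC)) hxh
      · rw [hMv, hMw, hC.eq_of_mem hC' hxC hxC']
    exact Prod.ext (hv1.trans hw1.symm) (Prod.ext hM (hCv.eq_of_mem (hM ▸ hCw) hxv hxw))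

namespace Strategy

variable {H1 H2 : HGraph α} {σ : Strategy H1 H2} {p v : Config α}

theorem valid_of_ne_init (hv : v ∈ σ.dom) (hne : v ≠ initConfig H1) :
    v.1 ∈ H2.edges ∧ v.2.1 ⊆ v.1 ∧ H1.MComp v.2.1 v.2.2 :=
  (σ.valid v hv).resolve_left hne

theorem exists_succ (hv : v ∈ σ.dom) (hne : v ≠ initConfig H1) : ∃ p, σ.Succ p v := by
  rcases (σ.reach v hv).cases_tail with h | ⟨p, -, hp⟩
  · exact absurd h hne
  · exact ⟨p, hp⟩

theorem mcomp_of_succ (h : σ.Succ p v) : H1.MComp v.2.1 v.2.2 :=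
  h.2.2.1 ▸ h.2.2.2.1

theorem mconn_of_succ (h : σ.Succ p v) : H1.MConn (p.2.1 ∩ v.2.1) (p.2.2 ∪ v.2.2) :=
  h.2.2.1 ▸ h.2.2.2.2

theorem exists_denotes (hv : v ∈ σ.dom)
    (hcalm : v = initConfig H1 ∨ ¬(v.1 ∩ v.2.2).Nonempty) :
    ∃ d ∈ (H2.edges ×ˢ H1.nodes).insertNone, H1.Denotes d v.2.2 := by
  by_cases hne : v = initConfig H1
  · exact ⟨none, by simp, by subst hne; rfl⟩
  obtain ⟨hvE, hMh, hC⟩ := σ.valid_of_ne_init hv hne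
  obtain ⟨y, hy⟩ := hC.1
  have hd : Disjoint v.2.2 v.1 := by
    rw [Finset.disjoint_iff_inter_eq_empty, Finset.inter_comm]
    exact Finset.not_nonempty_iff_eq_empty.1 (hcalm.resolve_left hne)
  exact ⟨some (v.1, y), by simpa using ⟨hvE, hC.subset_nodes hy⟩, hy,
    hC.of_border_subset (hC.border_subset.trans hMh) hd⟩

namespace Greedy

variable (hσ : σ.Greedy)
include hσ

theorem guard_eq (h : σ.Succ p v) : v.2.1 = v.1 ∩ H1.Fr p.2.2 := by
  rw [h.2.2.1, (hσ p h.1).1, ← h.2.1]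

theorem edge_eq (h : σ.Succ p v) (hp : (p.1 ∩ p.2.2).Nonempty) : v.1 = p.1 :=
  h.2.1.trans ((hσ p h.1).2 hp)

theorem subset_of_succ (h : σ.Succ p v) (hne : p ≠ initConfig H1)
    (hp : (p.1 ∩ p.2.2).Nonempty) : v.2.2 ⊆ p.2.2 := by
  obtain ⟨-, hMh, hC⟩ := σ.valid_of_ne_init h.1 hne
  have hb : H1.border p.2.2 ⊆ p.2.1 ∩ v.2.1 := by
    intro y hy
    rw [hσ.guard_eq h, hσ.edge_eq h hp]
    exact Finset.mem_inter.2 ⟨hC.border_subset hy,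
      Finset.mem_inter.2 ⟨hMh (hC.border_subset hy), (Finset.mem_sdiff.1 hy).1⟩⟩
  obtain ⟨z, hz⟩ := hC.1
  exact fun y hy => (mconn_of_succ h z (Finset.mem_union_left _ hz) y
    (Finset.mem_union_right _ hy)).mem_of_border_subset hb hz

theorem not_nonempty_of_succ (h : σ.Succ p v) (hne : p ≠ initConfig H1)
    (hp : (p.1 ∩ p.2.2).Nonempty) : ¬(v.1 ∩ v.2.2).Nonempty := by
  rintro ⟨x, hx⟩
  obtain ⟨hxh, hxC⟩ := Finset.mem_inter.1 hx
  have hxCp := hσ.subset_of_succ h hne hp hxC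
  have hxM : x ∈ v.2.1 := by
    rw [hσ.guard_eq h]
    exact Finset.mem_inter.2 ⟨hxh,
      HGraph.mem_Fr_of_mem ((mcomp_of_succ h).subset_nodes hxC) hxCp⟩
  exact (mcomp_of_succ h).notMem hxC hxM

theorem exists_guard (hv : v ∈ σ.dom) (hne : v ≠ initConfig H1) {x : α}
    (hx : x ∈ v.2.2) :
    ∃ d ∈ (H2.edges ×ˢ H1.nodes).insertNone, ∃ C₀, H1.Denotes d C₀ ∧
      (v.2.1 = v.1 ∩ H1.Fr C₀ ∨ x ∉ v.1 ∧ ∃ C, H1.MComp (v.1 ∩ H1.Fr C₀) C ∧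
        x ∈ C ∧ (v.1 ∩ C).Nonempty ∧ v.2.1 = v.1 ∩ H1.Fr C) := by
  obtain ⟨p, hpv⟩ := σ.exists_succ hv hne
  by_cases hp : p = initConfig H1 ∨ ¬(p.1 ∩ p.2.2).Nonempty
  · obtain ⟨d, hd, hdC⟩ := σ.exists_denotes hpv.1 hp
    exact ⟨d, hd, p.2.2, hdC, .inl (hσ.guard_eq hpv)⟩
  push Not at hp
  obtain ⟨q, hqp⟩ := σ.exists_succ hpv.1 hp.1
  have hq : q = initConfig H1 ∨ ¬(q.1 ∩ q.2.2).Nonempty := by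
    by_contra! hq
    exact hσ.not_nonempty_of_succ hqp hq.1 hq.2 hp.2
  obtain ⟨d, hd, hdC⟩ := σ.exists_denotes hqp.1 hq
  have hvp := hσ.edge_eq hpv hp.2
  refine ⟨d, hd, q.2.2, hdC, .inr ⟨fun hxh => hσ.not_nonempty_of_succ hpv hp.1 hp.2
    ⟨x, Finset.mem_inter.2 ⟨hxh, hx⟩⟩, p.2.2, ?_, hσ.subset_of_succ hpv hp.1 hp.2 hx,
    hvp ▸ hp.2, hσ.guard_eq hpv⟩⟩
  rw [hvp, ← hσ.guard_eq hqp]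
  exact mcomp_of_succ hqp

theorem exists_codes (hv : v ∈ σ.dom) :
    ∃ c ∈ ((H2.edges ×ˢ H1.nodes) ×ˢ (H2.edges ×ˢ H1.nodes).insertNone).insertNone,
      Codes H1 c v := by
  by_cases hne : v = initConfig H1
  · exact ⟨none, by simp, hne⟩
  obtain ⟨hvE, -, hC⟩ := σ.valid_of_ne_init hv hne
  obtain ⟨x, hx, hxh⟩ : ∃ x ∈ v.2.2, (v.1 ∩ v.2.2).Nonempty → x ∈ v.1 := by
    by_cases hh : (v.1 ∩ v.2.2).Nonempty
    · obtain ⟨x, hx⟩ := hh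
      exact ⟨x, (Finset.mem_inter.1 hx).2, fun _ => (Finset.mem_inter.1 hx).1⟩
    · obtain ⟨x, hx⟩ := hC.1
      exact ⟨x, hx, fun h => absurd h hh⟩
  obtain ⟨d, hd, hM⟩ := hσ.exists_guard hv hne hx
  exact ⟨some ((v.1, x), d), Finset.some_mem_insertNone.2
    (Finset.mem_product.2 ⟨Finset.mem_product.2 ⟨hvE, hC.subset_nodes hx⟩, hd⟩),
    rfl, hx, hxh, hC, hM⟩

end Greedy

end Strategy

theorem greedy_strategy_domain_bound_general {α : Type} [DecidableEq α]
    (H1 H2 : HGraph α)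
    (σ : Strategy H1 H2) (hσ : σ.Greedy) :
    σ.dom.Finite ∧
      σ.dom.ncard ≤
        H2.edges.card * H1.nodes.card * (H2.edges.card * H1.nodes.card + 1) + 1 := by
  simpa [Finset.card_insertNone, Finset.card_product] using
    Set.finite_and_ncard_le_of_codes (Codes H1) (fun _ _ _ => Codes.unique)
      fun _ hv => hσ.exists_codes hv

/-- The number of configurations in the domain of any greedy strategy in the
Robber and Captain game on `(H1, H2)` is at most
`|edges(H2)| · |nodes(H1)| · (|edges(H2)| · |nodes(H1)| + 1) + 1`. -/
theorem greedy_strategy_domain_bound {α : Type} [DecidableEq α]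
    (H1 H2 : HGraph α) (hnodes : H1.nodes = H2.nodes)
    (σ : Strategy H1 H2) (hσ : σ.Greedy) :
    σ.dom.Finite ∧
      σ.dom.ncard ≤
        H2.edges.card * H1.nodes.card * (H2.edges.card * H1.nodes.card + 1) + 1 :=
  greedy_strategy_domain_bound_general H1 H2 σ hσ
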